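/- The Jonquières subgroup is its own normalizer: the normalizer of Jonq(n) in G equals Jonq(n); equivalently, any φ ∈ G with φ ∘ Jonq(n) ∘ φ⁻¹ = Jonq(n) belongs to Jonq(n). -/

import Mathlib

open MvPolynomial

noncomputable section

variable (k : Type*) [Field k] (n : ℕ)

/-- `Asub k n j` is the subalgebra of `k[x_1,…,x_n]` generated by the first `j` variables
`x_1, …, x_j`  (so `Asub k n 0 = k` and `Asub k n n` is everything). -/
def Asub (j : ℕ) : Subalgebra k (MvPolynomial (Fin n) k) :=
  Algebra.adjoin k {P | ∃ i : Fin n, (i : ℕ) < j ∧ P = X i}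

/-- The Jonquières subgroup of the automorphism group of affine `n`-space:
all `k`-algebra automorphisms `φ` of `k[x_1,…,x_n]` with `φ (Asub k n j) = Asub k n j`
for every `j = 1, …, n` (the condition for `j = 0` holds trivially). -/
def Jonq : Subgroup (MvPolynomial (Fin n) k ≃ₐ[k] MvPolynomial (Fin n) k) where
  carrier := {φ | ∀ j ≤ n,
    (Asub k n j).map (φ : MvPolynomial (Fin n) k →ₐ[k] MvPolynomial (Fin n) k) = Asub k n j}
  one_mem' := by
    intro j _
    have h : ((1 : MvPolynomial (Fin n) k ≃ₐ[k] MvPolynomial (Fin n) k) :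
        MvPolynomial (Fin n) k →ₐ[k] MvPolynomial (Fin n) k) = AlgHom.id k _ := by
      ext x; rfl
    rw [h, Subalgebra.map_id]
  mul_mem' := by
    intro φ ψ hφ hψ j hj
    have h : ((φ * ψ : MvPolynomial (Fin n) k ≃ₐ[k] MvPolynomial (Fin n) k) :
        MvPolynomial (Fin n) k →ₐ[k] MvPolynomial (Fin n) k)
        = (φ : MvPolynomial (Fin n) k →ₐ[k] MvPolynomial (Fin n) k).comp
          (ψ : MvPolynomial (Fin n) k →ₐ[k] MvPolynomial (Fin n) k) := by
      ext x; rfl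
    rw [h, ← Subalgebra.map_map, hψ j hj, hφ j hj]
  inv_mem' := by
    intro φ hφ j hj
    conv_lhs => rw [← hφ j hj]
    rw [Subalgebra.map_map]
    have h : ((φ⁻¹ : MvPolynomial (Fin n) k ≃ₐ[k] MvPolynomial (Fin n) k) :
          MvPolynomial (Fin n) k →ₐ[k] MvPolynomial (Fin n) k).comp
          (φ : MvPolynomial (Fin n) k →ₐ[k] MvPolynomial (Fin n) k) = AlgHom.id k _ := by
      exact AlgHom.ext fun x => φ.symm_apply_apply x
    rw [h, Subalgebra.map_id]

lemma mem_Jonq_iff (φ : MvPolynomial (Fin n) k ≃ₐ[k] MvPolynomial (Fin n) k) :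
    φ ∈ Jonq k n ↔ ∀ j ≤ n,
      (Asub k n j).map (φ : MvPolynomial (Fin n) k →ₐ[k] MvPolynomial (Fin n) k)
        = Asub k n j :=
  Iff.rfl

abbrev Rr := MvPolynomial (Fin n) k

def autOf (f g : Fin n → Rr k n) (hfg : ∀ i, aeval f (g i) = X i)
    (hgf : ∀ i, aeval g (f i) = X i) : Rr k n ≃ₐ[k] Rr k n :=
  AlgEquiv.ofAlgHom (aeval f) (aeval g)
    (MvPolynomial.algHom_ext (fun i => by simpa using hfg i))
    (MvPolynomial.algHom_ext (fun i => by simpa using hgf i))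

@[simp] lemma autOf_apply (f g : Fin n → Rr k n) (h1 h2) (p : Rr k n) :
    autOf k n f g h1 h2 p = aeval f p := rfl

@[simp] lemma autOf_symm_apply (f g : Fin n → Rr k n) (h1 h2) (p : Rr k n) :
    (autOf k n f g h1 h2).symm p = aeval g p := rfl

def sclAut (t : Fin n → kˣ) : Rr k n ≃ₐ[k] Rr k n :=
  autOf k n (fun i => C (t i : k) * X i) (fun i => C ((((t i)⁻¹ : kˣ) : k)) * X i)
    (by intro i; simp [← mul_assoc, ← C_mul])
    (by intro i; simp [← mul_assoc, ← C_mul])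

def trAut (c : Fin n → k) : Rr k n ≃ₐ[k] Rr k n :=
  autOf k n (fun i => X i + C (c i)) (fun i => X i - C (c i))
    (by intro i; simp) (by intro i; simp)

def elemAut (l i : Fin n) (hli : l ≠ i) : Rr k n ≃ₐ[k] Rr k n :=
  autOf k n (fun m => if m = i then X i + X l else X m)
    (fun m => if m = i then X i - X l else X m)
    (by intro m
        by_cases h : m = i
        · subst h
          rw [show (if m = m then X m - X l else X m) = X m - X l by simp]
          simp only [map_sub, aeval_X, eq_self_iff_true, if_true, if_neg hli]; ring
        · simp [h])
    (by intro m
        by_cases h : m = i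
        · subst h
          rw [show (if m = m then X m + X l else X m) = X m + X l by simp]
          simp only [map_add, aeval_X, eq_self_iff_true, if_true, if_neg hli]; ring
        · simp [h])

-- Part 2 : membership lemmas
lemma C_mem_sub (S : Subalgebra k (Rr k n)) (a : k) : C a ∈ S := by
  rw [← MvPolynomial.algebraMap_eq]; exact S.algebraMap_mem a

lemma X_mem_Asub {j : ℕ} {i : Fin n} (h : (i:ℕ) < j) : X i ∈ Asub k n j :=
  Algebra.subset_adjoin ⟨i, h, rfl⟩

lemma Asub_mono {j j' : ℕ} (h : j ≤ j') : Asub k n j ≤ Asub k n j' :=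
  Algebra.adjoin_mono (by rintro P ⟨i, hi, rfl⟩; exact ⟨i, lt_of_lt_of_le hi h, rfl⟩)

lemma Asub_map_le {φ : Rr k n →ₐ[k] Rr k n} {j : ℕ}
    (h : ∀ i : Fin n, (i:ℕ) < j → φ (X i) ∈ Asub k n j) :
    (Asub k n j).map φ ≤ Asub k n j := by
  rw [Asub, AlgHom.map_adjoin, Algebra.adjoin_le_iff]
  rintro _ ⟨P, ⟨i, hi, rfl⟩, rfl⟩
  exact h i hi

lemma map_eq_of_le_le (φ : Rr k n ≃ₐ[k] Rr k n) (B : Subalgebra k (Rr k n))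
    (h1 : B.map (φ : Rr k n →ₐ[k] Rr k n) ≤ B)
    (h2 : B.map (φ.symm : Rr k n →ₐ[k] Rr k n) ≤ B) :
    B.map (φ : Rr k n →ₐ[k] Rr k n) = B := by
  refine le_antisymm h1 ?_
  intro b hb
  exact ⟨φ.symm b, h2 ⟨b, hb, rfl⟩, φ.apply_symm_apply b⟩

lemma mem_Jonq_of (φ : Rr k n ≃ₐ[k] Rr k n)
    (h : ∀ j ≤ n, ∀ i : Fin n, (i:ℕ) < j →
      φ (X i) ∈ Asub k n j ∧ φ.symm (X i) ∈ Asub k n j) : φ ∈ Jonq k n :=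
  fun j hj => map_eq_of_le_le k n φ _
    (Asub_map_le k n (fun i hi => (h j hj i hi).1))
    (Asub_map_le k n (fun i hi => (h j hj i hi).2))

lemma sclAut_mem (t : Fin n → kˣ) : sclAut k n t ∈ Jonq k n := by
  refine mem_Jonq_of k n _ (fun j hj i hi => ?_)
  constructor
  · show aeval _ (X i) ∈ _
    rw [aeval_X]
    exact mul_mem (C_mem_sub k n _ _) (X_mem_Asub k n hi)
  · show aeval _ (X i) ∈ _
    rw [aeval_X]
    exact mul_mem (C_mem_sub k n _ _) (X_mem_Asub k n hi)

lemma trAut_mem (c : Fin n → k) : trAut k n c ∈ Jonq k n := by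
  refine mem_Jonq_of k n _ (fun j hj i hi => ?_)
  constructor
  · show aeval _ (X i) ∈ _
    rw [aeval_X]
    exact add_mem (X_mem_Asub k n hi) (C_mem_sub k n _ _)
  · show aeval _ (X i) ∈ _
    rw [aeval_X]
    exact sub_mem (X_mem_Asub k n hi) (C_mem_sub k n _ _)

lemma elemAut_mem (l i : Fin n) (h : (l:ℕ) < (i:ℕ)) :
    elemAut k n l i (Fin.ne_of_val_ne h.ne) ∈ Jonq k n := by
  refine mem_Jonq_of k n _ (fun j hj m hm => ?_)
  constructor
  · show aeval _ (X m) ∈ _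
    rw [aeval_X]
    by_cases hmi : m = i
    · subst hmi
      rw [if_pos rfl]
      exact add_mem (X_mem_Asub k n hm) (X_mem_Asub k n (h.trans hm))
    · rw [if_neg hmi]
      exact X_mem_Asub k n hm
  · show aeval _ (X m) ∈ _
    rw [aeval_X]
    by_cases hmi : m = i
    · subst hmi
      rw [if_pos rfl]
      exact sub_mem (X_mem_Asub k n hm) (X_mem_Asub k n (h.trans hm))
    · rw [if_neg hmi]
      exact X_mem_Asub k n hm

-- Part 3 : stability under Jonq
def JStable (B : Subalgebra k (Rr k n)) : Prop :=
  ∀ ψ : Rr k n ≃ₐ[k] Rr k n, ψ ∈ Jonq k n → B.map (ψ : Rr k n →ₐ[k] Rr k n) = B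

lemma JStable.apply_mem {B : Subalgebra k (Rr k n)} (hB : JStable k n B)
    {ψ : Rr k n ≃ₐ[k] Rr k n} (hψ : ψ ∈ Jonq k n) {f : Rr k n} (hf : f ∈ B) : ψ f ∈ B := by
  rw [← hB ψ hψ]
  exact ⟨f, hf, rfl⟩

lemma coe_mul_eq_comp (α β : Rr k n ≃ₐ[k] Rr k n) :
    ((α * β : Rr k n ≃ₐ[k] Rr k n) : Rr k n →ₐ[k] Rr k n)
      = (α : Rr k n →ₐ[k] Rr k n).comp (β : Rr k n →ₐ[k] Rr k n) := by
  ext x; rfl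

lemma normalizer_JStable (φ : Rr k n ≃ₐ[k] Rr k n) (hφ : φ ∈ Subgroup.normalizer (Jonq k n : Set (Rr k n ≃ₐ[k] Rr k n)))
    {j : ℕ} (hj : j ≤ n) :
    JStable k n ((Asub k n j).map (φ : Rr k n →ₐ[k] Rr k n)) := by
  intro ψ hψ
  have hχ : φ⁻¹ * ψ * φ ∈ Jonq k n := by
    have := (Subgroup.mem_normalizer_iff.mp ((Subgroup.normalizer (Jonq k n : Set (Rr k n ≃ₐ[k] Rr k n))).inv_mem hφ) ψ).mp hψ
    simpa [mul_assoc] using this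
  have key : ψ * φ = φ * (φ⁻¹ * ψ * φ) := by group
  rw [Subalgebra.map_map, ← coe_mul_eq_comp, key, coe_mul_eq_comp,
    ← Subalgebra.map_map, hχ j hj]

-- Part 4 : scaling and monomial span
lemma scl_monomial (t : Fin n → kˣ) (b : Fin n →₀ ℕ) (c : k) :
    sclAut k n t (monomial b c) = monomial b ((b.prod fun i e => (t i : k) ^ e) * c) := by
  show aeval _ (monomial b c) = _
  rw [aeval_monomial, MvPolynomial.algebraMap_eq, monomial_eq]
  rw [Finsupp.prod, Finsupp.prod, Finsupp.prod]
  simp only [mul_pow, ← C_pow]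
  rw [Finset.prod_mul_distrib]
  rw [show (∏ x ∈ b.support, C ((t x : k) ^ b x)) = C (∏ x ∈ b.support, (t x : k) ^ b x) from
    (map_prod (C : k →+* Rr k n) _ _).symm]
  rw [← mul_assoc, ← C_mul, mul_comm c]

lemma coeff_sclAut (t : Fin n → kˣ) (f : Rr k n) (a : Fin n →₀ ℕ) :
    coeff a (sclAut k n t f) = (a.prod fun i e => (t i : k) ^ e) * coeff a f := by
  conv_lhs => rw [f.as_sum, map_sum]
  rw [coeff_sum]
  have h0 : ∀ b ∈ f.support, b ≠ a → coeff a (sclAut k n t (monomial b (coeff b f))) = 0 := by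
    intro b _ hba
    rw [scl_monomial, coeff_monomial, if_neg hba]
  have h1 : a ∉ f.support → coeff a (sclAut k n t (monomial a (coeff a f))) = 0 := by
    intro ha
    rw [scl_monomial, coeff_monomial, if_pos rfl, MvPolynomial.notMem_support_iff.mp ha, mul_zero]
  rw [Finset.sum_eq_single a h0 h1, scl_monomial, coeff_monomial, if_pos rfl]

lemma exists_pow_ne [Infinite k] {u v : ℕ} (huv : u ≠ v) :
    ∃ s : kˣ, (s : k) ^ u ≠ (s : k) ^ v := by
  -- first get s with s ^ (max - min) ≠ 1
  have key : ∀ m : ℕ, m ≠ 0 → ∃ s : kˣ, (s : k) ^ m ≠ 1 := by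
    intro m hm
    have hfin : ({x : k | (Polynomial.X ^ m - Polynomial.C 1 : Polynomial k).IsRoot x} ∪ {0}).Finite :=
      (Polynomial.finite_setOf_isRoot
        (Polynomial.X_pow_sub_C_ne_zero (Nat.pos_of_ne_zero hm) 1)).union (Set.finite_singleton 0)
    obtain ⟨x, hx⟩ := (Set.Finite.infinite_compl hfin).nonempty
    simp only [Set.mem_compl_iff, Set.mem_union, Set.mem_singleton_iff, not_or] at hx
    refine ⟨Units.mk0 x hx.2, ?_⟩
    intro h1
    apply hx.1
    have hx1 : x ^ m = 1 := by simpa using h1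
    simp [Polynomial.IsRoot, hx1]
  rcases Nat.lt_or_ge u v with h | h
  · obtain ⟨s, hs⟩ := key (v - u) (by omega)
    refine ⟨s, fun he => hs ?_⟩
    have : (s : k) ^ u * (s : k) ^ (v - u) = (s : k) ^ u * 1 := by
      rw [← pow_add, mul_one, Nat.add_sub_cancel' (le_of_lt h)]
      exact he.symm
    exact mul_left_cancel₀ (pow_ne_zero _ s.ne_zero) this
  · have h' : v < u := by omega
    obtain ⟨s, hs⟩ := key (u - v) (by omega)
    refine ⟨s, fun he => hs ?_⟩
    have : (s : k) ^ v * (s : k) ^ (u - v) = (s : k) ^ v * 1 := by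
      rw [← pow_add, mul_one, Nat.add_sub_cancel' (le_of_lt h')]
      exact he
    exact mul_left_cancel₀ (pow_ne_zero _ s.ne_zero) this

lemma monomial_mem_aux [Infinite k] {B : Subalgebra k (Rr k n)} (hB : JStable k n B) :
    ∀ N (f : Rr k n), f ∈ B → f.support.card ≤ N → ∀ a ∈ f.support, monomial a (1 : k) ∈ B := by
  intro N
  induction N with
  | zero =>
    intro f _ hc a ha
    rw [Nat.le_zero, Finset.card_eq_zero] at hc
    rw [hc] at ha
    exact absurd ha (Finset.notMem_empty a)
  | succ N ih =>
    intro f hf hc a ha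
    by_cases hone : ∀ b ∈ f.support, b = a
    · set q := coeff a f with hq
      have hc0 : q ≠ 0 := mem_support_iff.mp ha
      have hf' : f = monomial a q := by
        apply MvPolynomial.ext
        intro v
        rw [coeff_monomial]
        split_ifs with h
        · rw [← h, hq]
        · by_contra hv
          exact h ((hone v (mem_support_iff.mpr hv)).symm)
      have heq : monomial a (1 : k) = q⁻¹ • f := by
        rw [hf', smul_monomial, smul_eq_mul, inv_mul_cancel₀ hc0]
      rw [heq]
      exact B.smul_mem hf _
    · push_neg at hone
      obtain ⟨b, hb, hba⟩ := hone
      obtain ⟨i, hi⟩ : ∃ i, a i ≠ b i := by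
        by_contra h
        push_neg at h
        exact hba (Finsupp.ext fun i => (h i).symm)
      obtain ⟨s, hs⟩ := exists_pow_ne k hi
      set t : Fin n → kˣ := Function.update (fun _ => (1 : kˣ)) i s with ht
      have hw : ∀ v : Fin n →₀ ℕ, (v.prod fun i' e => ((t i' : k)) ^ e) = (s : k) ^ (v i) := by
        intro v
        rw [Finsupp.prod]
        rw [Finset.prod_eq_single i
          (fun b' _ hb' => by rw [ht, Function.update_of_ne hb']; simp)
          (fun hiv => by rw [Finsupp.notMem_support_iff.mp hiv, pow_zero])]
        rw [ht, Function.update_self]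
      set g : Rr k n := sclAut k n t f - C ((s : k) ^ (b i)) * f with hg
      have hgB : g ∈ B :=
        sub_mem (hB.apply_mem k n (sclAut_mem k n t) hf) (mul_mem (C_mem_sub k n B _) hf)
      have hgc : ∀ v, coeff v g = ((s : k) ^ (v i) - (s : k) ^ (b i)) * coeff v f := by
        intro v
        rw [hg, coeff_sub, coeff_sclAut, coeff_C_mul, hw, sub_mul]
      have hsub : g.support ⊆ f.support.erase b := by
        intro v hv
        rw [mem_support_iff] at hv
        rw [Finset.mem_erase]
        constructor
        · rintro rfl
          apply hv
          rw [hgc, sub_self, zero_mul]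
        · rw [mem_support_iff]
          intro h0
          exact hv (by rw [hgc, h0, mul_zero])
      have hag : a ∈ g.support := by
        rw [mem_support_iff, hgc]
        exact mul_ne_zero (sub_ne_zero.mpr hs) (mem_support_iff.mp ha)
      have hcard : g.support.card ≤ N := by
        have := Finset.card_le_card hsub
        rw [Finset.card_erase_of_mem hb] at this
        omega
      exact ih g hgB hcard a hag

lemma monomial_mem [Infinite k] {B : Subalgebra k (Rr k n)} (hB : JStable k n B)
    {f : Rr k n} (hf : f ∈ B) {a : Fin n →₀ ℕ} (ha : a ∈ f.support) :
    monomial a (1 : k) ∈ B :=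
  monomial_mem_aux k n hB f.support.card f hf le_rfl a ha

-- Part 5 : erasing a variable and pure powers
lemma prod_X_pow (b : Fin n →₀ ℕ) :
    (∏ i : Fin n, (X i : Rr k n) ^ (b i)) = monomial b 1 := by
  rw [monomial_eq, map_one, one_mul, Finsupp.prod_fintype _ _ (fun i => pow_zero _)]

lemma erase_mem [Infinite k] {B : Subalgebra k (Rr k n)} (hB : JStable k n B)
    {a : Fin n →₀ ℕ} (ha : monomial a (1 : k) ∈ B) (m : Fin n) :
    monomial (a.erase m) (1 : k) ∈ B := by
  set c : Fin n → k := fun i => if i = m then 1 else 0 with hc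
  have hP : trAut k n c (monomial a 1) ∈ B := hB.apply_mem k n (trAut_mem k n c) ha
  have hPe : trAut k n c (monomial a (1 : k))
      = monomial (a.erase m) 1 * (X m + C 1) ^ (a m) := by
    show aeval _ (monomial a 1) = _
    rw [aeval_monomial, map_one, one_mul,
      Finsupp.prod_fintype _ _ (fun i => pow_zero _)]
    rw [← Finset.mul_prod_erase Finset.univ _ (Finset.mem_univ m)]
    have h1 : ∀ i ∈ Finset.univ.erase m,
        ((X i + C (c i) : Rr k n)) ^ (a i) = (X i : Rr k n) ^ ((a.erase m) i) := by
      intro i hi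
      have him : i ≠ m := Finset.ne_of_mem_erase hi
      rw [hc]
      simp only [if_neg him, map_zero, add_zero, Finsupp.erase_ne him]
    rw [Finset.prod_congr rfl h1]
    have h2 : (∏ i ∈ Finset.univ.erase m, (X i : Rr k n) ^ ((a.erase m) i))
        = monomial (a.erase m) 1 := by
      rw [← prod_X_pow k n (a.erase m), ← Finset.mul_prod_erase Finset.univ
        (fun i => (X i : Rr k n) ^ ((a.erase m) i)) (Finset.mem_univ m)]
      rw [show (a.erase m) m = 0 from Finsupp.erase_same, pow_zero, one_mul]
    rw [h2]
    have hcm : c m = 1 := by rw [hc]; simp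
    rw [hcm]
    ring
  have hsupp : a.erase m ∈ (trAut k n c (monomial a (1:k))).support := by
    rw [mem_support_iff, hPe]
    have : coeff (a.erase m + 0) ((monomial (a.erase m)) (1:k) * (X m + C 1) ^ (a m))
        = 1 * coeff 0 ((X m + C 1 : Rr k n) ^ (a m)) := coeff_monomial_mul _ _ _ _
    rw [add_zero] at this
    have hcc : coeff 0 ((X m + C 1 : Rr k n) ^ (a m)) = 1 := by
      have h3 : (constantCoeff : Rr k n →+* k) ((X m + C 1) ^ (a m)) = 1 := by
        rw [map_pow, map_add, constantCoeff_X, constantCoeff_C, zero_add, one_pow]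
      rw [constantCoeff_eq] at h3
      exact h3
    rw [this, one_mul, hcc]
    exact one_ne_zero
  exact monomial_mem k n hB hP hsupp

lemma Xpow_mem_aux [Infinite k] {B : Subalgebra k (Rr k n)} (hB : JStable k n B) :
    ∀ N (a : Fin n →₀ ℕ), a.support.card ≤ N → monomial a (1 : k) ∈ B →
      ∀ i : Fin n, X i ^ (a i) ∈ B := by
  intro N
  induction N with
  | zero =>
    intro a hc _ i
    rw [Nat.le_zero, Finset.card_eq_zero, Finsupp.support_eq_empty] at hc
    rw [hc]
    simp only [Finsupp.coe_zero, Pi.zero_apply, pow_zero]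
    exact one_mem B
  | succ N ih =>
    intro a hc haB i
    by_cases hone : ∀ m ∈ a.support, m = i
    · have haeq : a = Finsupp.single i (a i) := by
        ext m
        by_cases hmi : m = i
        · rw [hmi, Finsupp.single_eq_same]
        · rw [Finsupp.single_eq_of_ne' (fun h => hmi h.symm)]
          by_contra hm
          exact hmi (hone m (Finsupp.mem_support_iff.mpr hm))
      rw [X_pow_eq_monomial]
      have : (Finsupp.single i (a i)) = (fun₀ | i => a i) := rfl
      rw [← this, ← haeq]
      exact haB
    · push_neg at hone
      obtain ⟨m, hm, hmi⟩ := hone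
      have h1 : monomial (a.erase m) (1 : k) ∈ B := erase_mem k n hB haB m
      have h2 : (a.erase m).support.card ≤ N := by
        rw [Finsupp.support_erase, Finset.card_erase_of_mem hm]
        omega
      have h3 := ih (a.erase m) h2 h1 i
      rwa [Finsupp.erase_ne (fun h => hmi h.symm)] at h3

lemma Xpow_mem [Infinite k] {B : Subalgebra k (Rr k n)} (hB : JStable k n B)
    {a : Fin n →₀ ℕ} (haB : monomial a (1 : k) ∈ B) (i : Fin n) : X i ^ (a i) ∈ B :=
  Xpow_mem_aux k n hB a.support.card a le_rfl haB i


-- Part 6 : characteristic decomposition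
lemma exists_frobenius_decomp (d : ℕ) (hd : d ≠ 0) :
    ∃ q e : ℕ, d = q * e ∧ q ≠ 0 ∧ e ≠ 0 ∧ ((e : k) ≠ 0) ∧
      ∀ x y : Rr k n, (x + y) ^ q = x ^ q + y ^ q := by
  rcases CharP.char_is_prime_or_zero k (ringChar k) with hp | hp
  · haveI : Fact (Nat.Prime (ringChar k)) := ⟨hp⟩
    haveI hcR : CharP (Rr k n) (ringChar k) :=
      charP_of_injective_ringHom (MvPolynomial.C_injective (Fin n) k) (ringChar k)
    set p := ringChar k with hpdef
    set v := d.factorization p with hv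
    refine ⟨p ^ v, d / p ^ v, (Nat.ordProj_mul_ordCompl_eq_self d p).symm,
      pow_ne_zero _ hp.ne_zero, ?_, ?_, ?_⟩
    · exact (Nat.ordCompl_pos p hd).ne'
    · intro h0
      exact Nat.not_dvd_ordCompl hp hd ((CharP.cast_eq_zero_iff k p _).mp h0)
    · intro x y
      exact add_pow_char_pow x y p v
  · haveI : CharP k 0 := hp ▸ ringChar.charP k
    haveI : CharZero k := CharP.charP_to_charZero k
    exact ⟨1, d, (one_mul d).symm, one_ne_zero, hd, Nat.cast_ne_zero.mpr hd,
      fun x y => by rw [pow_one, pow_one, pow_one]⟩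

-- Part 7 : transfer of pure powers to smaller variables
lemma Xpow_transfer [Infinite k] {B : Subalgebra k (Rr k n)} (hB : JStable k n B)
    {i l : Fin n} (h : (l : ℕ) < (i : ℕ)) {d : ℕ} (hd : d ≠ 0) (hX : X i ^ d ∈ B) :
    ∃ q : ℕ, q ≠ 0 ∧ X l ^ q ∈ B := by
  obtain ⟨q, e, hde, hq, he, hek, hfr⟩ := exists_frobenius_decomp k n d hd
  have hli : l ≠ i := Fin.ne_of_val_ne h.ne
  have hil : i ≠ l := Fin.ne_of_val_ne (Nat.ne_of_gt h)
  have hP : elemAut k n l i hli (X i ^ d) ∈ B :=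
    hB.apply_mem k n (by simpa using elemAut_mem k n l i h) hX
  have hPe : elemAut k n l i hli (X i ^ d) = (X i ^ q + X l ^ q) ^ e := by
    show aeval _ (X i ^ d) = _
    rw [map_pow, aeval_X, if_pos rfl, hde, pow_mul, hfr]
  set a0 : Fin n →₀ ℕ := Finsupp.single i (q * (e - 1)) + Finsupp.single l q with ha0
  have hterm : ∀ t, ((X i : Rr k n) ^ q) ^ t * ((X l : Rr k n) ^ q) ^ (e - t) *
      ((e.choose t : ℕ) : Rr k n)
      = monomial (Finsupp.single i (q * t) + Finsupp.single l (q * (e - t)))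
          ((e.choose t : k)) := by
    intro t
    rw [← pow_mul, ← pow_mul, mul_comm q t, mul_comm q (e - t), X_pow_eq_monomial,
      X_pow_eq_monomial]
    rw [show ((fun₀ | i => t * q) : Fin n →₀ ℕ) = Finsupp.single i (q * t) by
      rw [mul_comm]]
    rw [show ((fun₀ | l => (e - t) * q) : Fin n →₀ ℕ) = Finsupp.single l (q * (e - t)) by
      rw [mul_comm]]
    rw [monomial_mul, mul_one]
    rw [show ((e.choose t : ℕ) : Rr k n) = C ((e.choose t : ℕ) : k) from
      (map_natCast (C : k →+* Rr k n) _).symm]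
    rw [mul_comm, C_mul_monomial, mul_one]
  have hcoeff : coeff a0 ((X i ^ q + X l ^ q : Rr k n) ^ e) = (e : k) := by
    rw [add_pow, coeff_sum]
    have hval : ∀ t ∈ Finset.range (e + 1),
        coeff a0 ((X i ^ q) ^ t * ((X l : Rr k n) ^ q) ^ (e - t) * ((e.choose t : ℕ) : Rr k n))
          = if t = e - 1 then (e : k) else 0 := by
      intro t _
      rw [hterm t, coeff_monomial]
      by_cases hte : t = e - 1
      · subst hte
        have hnum : e.choose (e - 1) = e := by
          have h1 : e.choose (e - 1) = e.choose 1 := Nat.choose_symm (by omega : 1 ≤ e)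
          rw [h1, Nat.choose_one_right]
        have hmu : (Finsupp.single i (q * (e - 1)) + Finsupp.single l (q * (e - (e - 1)))) = a0 := by
          rw [show e - (e - 1) = 1 by omega, mul_one, ha0]
        rw [if_pos rfl, if_pos hmu]
        exact_mod_cast congrArg (Nat.cast : ℕ → k) hnum
      · rw [if_neg hte, if_neg]
        intro heq
        apply hte
        have hi := congrArg (fun f : Fin n →₀ ℕ => f i) heq
        simp only [ha0, Finsupp.add_apply, Finsupp.single_eq_same,
          Finsupp.single_eq_of_ne' hli, add_zero] at hi
        exact Nat.eq_of_mul_eq_mul_left (Nat.pos_of_ne_zero hq) hi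
    rw [Finset.sum_congr rfl hval, Finset.sum_ite_eq' (Finset.range (e + 1)) (e - 1)]
    rw [if_pos (Finset.mem_range.mpr (by omega))]
  have ha0supp : a0 ∈ ((X i ^ q + X l ^ q : Rr k n) ^ e).support := by
    rw [mem_support_iff, hcoeff]
    exact hek
  have hmono : monomial a0 (1 : k) ∈ B := monomial_mem k n hB (hPe ▸ hP) ha0supp
  have hfin := Xpow_mem k n hB hmono l
  have ha0l : a0 l = q := by
    rw [ha0, Finsupp.add_apply, Finsupp.single_eq_of_ne' hil, Finsupp.single_eq_same, zero_add]
  rw [ha0l] at hfin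
  exact ⟨q, hq, hfin⟩

-- Part 8 : membership characterization of Asub
lemma Asub_eq_supported (j : ℕ) : Asub k n j = supported k {i : Fin n | (i : ℕ) < j} := by
  rw [Asub, supported_eq_adjoin_X]
  congr 1
  ext P
  constructor
  · rintro ⟨i, hi, rfl⟩
    exact ⟨i, hi, rfl⟩
  · rintro ⟨i, hi, rfl⟩
    exact ⟨i, hi, rfl⟩

lemma mem_Asub_iff {j : ℕ} {f : Rr k n} :
    f ∈ Asub k n j ↔ ∀ i ∈ f.vars, (i : ℕ) < j := by
  rw [Asub_eq_supported, mem_supported]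
  constructor
  · intro h i hi
    exact h hi
  · intro h i hi
    exact h i hi

lemma Asub_top : Asub k n n = ⊤ := by
  rw [Asub]
  convert MvPolynomial.adjoin_range_X (R := k) (σ := Fin n) using 2
  ext P
  constructor
  · rintro ⟨i, _, rfl⟩
    exact ⟨i, rfl⟩
  · rintro ⟨i, rfl⟩
    exact ⟨i, i.isLt, rfl⟩

-- Part 9 : integrality
lemma pow_mem_integral {A : Subalgebra k (Rr k n)} {x : Rr k n} {q : ℕ} (hq : q ≠ 0)
    (h : x ^ q ∈ A) : IsIntegral A x := by
  refine ⟨Polynomial.X ^ q - Polynomial.C (⟨x ^ q, h⟩ : A), Polynomial.monic_X_pow_sub_C _ hq, ?_⟩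
  simp only [Polynomial.eval₂_sub, Polynomial.eval₂_X_pow, Polynomial.eval₂_C]
  show x ^ q - ((⟨x ^ q, h⟩ : A) : Rr k n) = 0
  rw [sub_self]

lemma not_integral_X {j : ℕ} {i : Fin n} (hij : ¬ ((i : ℕ) < j)) :
    ¬ IsIntegral (Asub k n j) (X i : Rr k n) := by
  rintro ⟨p, hpm, hp⟩
  set E : Rr k n →ₐ[k] Polynomial (Rr k n) :=
    aeval (fun m => if m = i then Polynomial.X else Polynomial.C (X m)) with hE
  have hconst : ∀ a : Rr k n, a ∈ Asub k n j → E a = Polynomial.C a := by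
    intro a ha
    have hle : Asub k n j ≤ AlgHom.equalizer E (Polynomial.CAlgHom (R := k) (A := Rr k n)) := by
      rw [Asub, Algebra.adjoin_le_iff]
      rintro _ ⟨m, hm, rfl⟩
      show E (X m) = Polynomial.CAlgHom (X m)
      rw [hE, aeval_X, if_neg (fun hmi => hij (by rw [← hmi]; exact hm))]
      rfl
    exact hle ha
  have hEX : (E : Rr k n →+* Polynomial (Rr k n)) (X i) = Polynomial.X := by
    show E (X i) = Polynomial.X
    rw [hE, aeval_X, if_pos rfl]
  have hfg : (E : Rr k n →+* Polynomial (Rr k n)).comp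
        (algebraMap (Asub k n j) (Rr k n))
      = (Polynomial.C : Rr k n →+* Polynomial (Rr k n)).comp
        (algebraMap (Asub k n j) (Rr k n)) :=
    RingHom.ext fun c => hconst c c.2
  have h1 := Polynomial.hom_eval₂ p (algebraMap (Asub k n j) (Rr k n))
    (E : Rr k n →+* Polynomial (Rr k n)) (X i)
  rw [hp, map_zero, hfg, hEX] at h1
  have hq0 : p.map (algebraMap (Asub k n j) (Rr k n)) = 0 := by
    rw [show p.map (algebraMap (Asub k n j) (Rr k n))
      = Polynomial.eval₂ ((Polynomial.C : Rr k n →+* Polynomial (Rr k n)).comp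
          (algebraMap (Asub k n j) (Rr k n))) Polynomial.X p from rfl]
    exact h1.symm
  exact (hpm.map (algebraMap (Asub k n j) (Rr k n))).ne_zero hq0

-- Part 10 : the main argument
lemma map_symm_eq {φ : Rr k n ≃ₐ[k] Rr k n} {B : Subalgebra k (Rr k n)}
    (h : B.map (φ : Rr k n →ₐ[k] Rr k n) = B) :
    B.map (φ.symm : Rr k n →ₐ[k] Rr k n) = B := by
  apply le_antisymm
  · rintro _ ⟨b, hb, rfl⟩
    rw [← h] at hb
    obtain ⟨y, hy, rfl⟩ := hb
    simpa using hy
  · intro b hb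
    have hφb : φ b ∈ B := by
      rw [← h]
      exact ⟨b, hb, rfl⟩
    exact ⟨φ b, hφb, φ.symm_apply_apply b⟩

lemma step_le [Infinite k] (θ : Rr k n ≃ₐ[k] Rr k n) (hθ : θ ∈ Subgroup.normalizer (Jonq k n : Set (Rr k n ≃ₐ[k] Rr k n)))
    {j : ℕ} (hj : j + 1 ≤ n)
    (h1 : (Asub k n (j + 1)).map (θ : Rr k n →ₐ[k] Rr k n) = Asub k n (j + 1)) :
    (Asub k n j).map (θ : Rr k n →ₐ[k] Rr k n) ≤ Asub k n j := by
  by_contra hcon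
  obtain ⟨f, hfB, hfA⟩ := SetLike.not_le_iff_exists.mp hcon
  set B := (Asub k n j).map (θ : Rr k n →ₐ[k] Rr k n) with hBdef
  have hstab : JStable k n B := normalizer_JStable k n θ hθ (le_trans (Nat.le_succ j) hj)
  have hBsub : B ≤ Asub k n (j + 1) := by
    rw [hBdef, ← h1]
    exact Subalgebra.map_mono (Asub_mono k n (Nat.le_succ j))
  obtain ⟨i, hivars, hij⟩ : ∃ i ∈ f.vars, ¬ ((i : ℕ) < j) := by
    by_contra hc
    push_neg at hc
    exact hfA ((mem_Asub_iff k n).mpr hc)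
  have hij1 : (i : ℕ) < j + 1 := (mem_Asub_iff k n).mp (hBsub hfB) i hivars
  have hieq : (i : ℕ) = j := by omega
  obtain ⟨a, haf, hai⟩ : ∃ a ∈ f.support, a i ≠ 0 := by
    obtain ⟨d, hd, hid⟩ := (mem_vars i).mp hivars
    exact ⟨d, hd, Finsupp.mem_support_iff.mp hid⟩
  have hmono : monomial a (1 : k) ∈ B := monomial_mem k n hstab hfB haf
  have hXi : X i ^ (a i) ∈ B := Xpow_mem k n hstab hmono i
  have hsymm1 : (Asub k n (j + 1)).map (θ.symm : Rr k n →ₐ[k] Rr k n) = Asub k n (j + 1) :=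
    map_symm_eq k n h1
  have hint : ∀ m : Fin n, (m : ℕ) < j + 1 → IsIntegral (Asub k n j) (θ.symm (X m)) := by
    intro m hm
    have hXq : ∃ q, q ≠ 0 ∧ X m ^ q ∈ B := by
      by_cases hmi : m = i
      · exact ⟨a i, hai, by rw [hmi]; exact hXi⟩
      · have hmne : (m : ℕ) ≠ (i : ℕ) := fun hh => hmi (Fin.val_injective hh)
        exact Xpow_transfer k n hstab (show (m : ℕ) < (i : ℕ) by omega) hai hXi
    obtain ⟨q, hq0, hqB⟩ := hXq
    obtain ⟨y, hy, hyx⟩ := hqB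
    have hpow : θ.symm (X m) ^ q ∈ Asub k n j := by
      have : θ.symm (X m) ^ q = y := by
        rw [← map_pow, ← hyx]
        exact θ.symm_apply_apply y
      rwa [this]
    exact pow_mem_integral k n hq0 hpow
  have hICle : Asub k n (j + 1) ≤
      Subalgebra.restrictScalars k (integralClosure (Asub k n j) (Rr k n)) := by
    conv_lhs => rw [← hsymm1]
    rw [Asub, AlgHom.map_adjoin, Algebra.adjoin_le_iff]
    rintro _ ⟨P, ⟨m, hm, rfl⟩, rfl⟩
    rw [SetLike.mem_coe, Subalgebra.mem_restrictScalars]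
    exact hint m hm
  have hXiI : IsIntegral (Asub k n j) (X i : Rr k n) := by
    have := hICle (X_mem_Asub k n (show (i : ℕ) < j + 1 by omega))
    rwa [Subalgebra.mem_restrictScalars, mem_integralClosure_iff] at this
  exact not_integral_X k n hij hXiI


/-- The Jonquières subgroup is its own normalizer. -/
theorem jonq_self_normalizing [IsAlgClosed k] (hn : 1 ≤ n) :
    Subgroup.normalizer (Jonq k n : Set (MvPolynomial (Fin n) k ≃ₐ[k] MvPolynomial (Fin n) k)) = Jonq k n := by
  haveI : Infinite k := inferInstance
  refine le_antisymm ?_ Subgroup.le_normalizer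
  intro φ hφ
  have main : ∀ m : ℕ, ∀ j : ℕ, j ≤ n → n ≤ j + m →
      (Asub k n j).map (φ : Rr k n →ₐ[k] Rr k n) = Asub k n j := by
    intro m
    induction m with
    | zero =>
      intro j hj1 hj2
      have hjn : j = n := by omega
      subst hjn
      rw [Asub_top]
      refine le_antisymm le_top ?_
      intro x _
      exact ⟨φ.symm x, trivial, φ.apply_symm_apply x⟩
    | succ m ih =>
      intro j hj1 hj2
      by_cases hcase : n ≤ j + m
      · exact ih j hj1 hcase
      · have hj1' : j + 1 ≤ n := by omega
        have hIH : (Asub k n (j + 1)).map (φ : Rr k n →ₐ[k] Rr k n) = Asub k n (j + 1) :=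
          ih (j + 1) hj1' (by omega)
        have hφinv : φ.symm ∈ Subgroup.normalizer (Jonq k n : Set (Rr k n ≃ₐ[k] Rr k n)) := by
          have : φ⁻¹ ∈ Subgroup.normalizer (Jonq k n : Set (Rr k n ≃ₐ[k] Rr k n)) := (Subgroup.normalizer (Jonq k n : Set (Rr k n ≃ₐ[k] Rr k n))).inv_mem hφ
          exact this
        have le1 := step_le k n φ hφ hj1' hIH
        have le2 := step_le k n φ.symm hφinv hj1' (map_symm_eq k n hIH)
        refine le_antisymm le1 ?_
        intro b hb
        exact ⟨φ.symm b, le2 ⟨b, hb, rfl⟩, φ.apply_symm_apply b⟩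
  intro j hj
  exact main n j hj (by omega)


end
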